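/- Fix an integer k ≥ 0, sequences φ, μ of nonzero integers, and nonnegative integers k_i, s_i, g_i for i = 1,…,n. Let P = m_+ ∘ m_1 ∘ ⋯ ∘ m_n ∘ m_−, where m_+ = ∏_{i: μ_i<0} a_{|μ_i|} ∘ ∏_{i: φ_i<0} b_{|φ_i|}, m_− = ∏_{i: μ_i>0} a_{−μ_i} ∘ ∏_{i: φ_i>0} b_{−φ_i}, and each m_i is a normally ordered monomial in the operators a_s, b_s (s nonzero) whose indices sum to −k·s_i and which has exactly k_i + 2 − 2 s_i − g_i factors of b-type. Let G be a Feynman graph for P in which no germ of m_+ is matched with a germ of m_−. Form a decorated graph on the ordered vertex set v_1 < ⋯ < v_n by turning every matched pair of germs at two vertices into a compact edge, and every matched pair consisting of a boundary germ (of m_+ or m_−) and a vertex germ into an end at that vertex; each flag inherits the weight and thickening of its vertex germ, each end is marked by the entry of (φ,μ) indexing its boundary germ, and each vertex v_i carries the decorations (g_i, s_i, k_i). Then: (1) the resulting decorated graph is a possibly disconnected floor diagram for 𝔽_k of degree (φ,μ); (2) its genus equals Σ_{i=1}^n (g_i + h_i − 1) + 1 − ℓ, where h_i is the number of factors of m_i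 with negative index and ℓ is the number of factors of m_+; (3) the weight of G equals ∏_i |φ_i| · ∏_i |μ_i| · ∏_e w(e), the last product running over the compact edges of the diagram; and (4) conversely, every possibly disconnected floor diagram for 𝔽_k of degree (φ,μ) whose i-th vertex carries decorations (g_i, s_i, k_i) arises by this construction from such a P and such a Feynman graph G for it. -/

import Mathlib

/-!  Floor diagrams for the Hirzebruch surface `𝔽_k` of degree `(φ, μ)`.

The underlying data: a graph on the linearly ordered vertex set `Fin n`, with compact
edges indexed by a finite type `E` (each compact edge `e` going from its left endpoint
`src e` to its right endpoint `tgt e`, carrying a weight `w e` and having exactly one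
thickened flag, located at `src e` iff `thickAtSrc e`), and with one end for each entry
of `(φ, μ)` (the end marked by an entry `m` is attached at the vertex `endv`, is
non-thickened for `φ`-entries and thickened for `μ`-entries, has weight `|m|` and points
left iff `m < 0`).  Each vertex `V` carries a genus `gv V`, a size `sv V` and a
ψ-power `kv V`. -/
structure FloorData (n1 n2 : ℕ) where
  n : ℕ
  E : Type
  [fintE : Fintype E]
  [deceqE : DecidableEq E]
  src : E → Fin n
  tgt : E → Fin n
  w : E → ℤ
  thickAtSrc : E → Bool
  endv : Fin n1 ⊕ Fin n2 → Fin n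
  gv : Fin n → ℕ
  sv : Fin n → ℕ
  kv : Fin n → ℕ

attribute [instance] FloorData.fintE FloorData.deceqE

/-- The marking of the ends: the end indexed by `Sum.inl i` is marked by `φ i`
(non-thickened), and the end indexed by `Sum.inr i` is marked by `μ i` (thickened). -/
def fdMark {n1 n2 : ℕ} (φ : Fin n1 → ℤ) (μ : Fin n2 → ℤ) : Fin n1 ⊕ Fin n2 → ℤ :=
  Sum.elim φ μ

/-- The conditions for `D` to be a floor diagram for `𝔽_k` of degree `(φ, μ)`, except
connectedness: all marks are nonzero; compact edges join distinct vertices (left endpoint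
strictly smaller); all weights are positive; at every vertex `V` exactly
`kv V + 2 - 2·sv V - gv V` of the adjacent flags are thickened (the thickened flags at `V`
being the thickened flags of compact edges located at `V` and the thickened (i.e. `μ`-marked)
ends attached at `V`); and at every vertex the signed sum of the weights of the adjacent
edges (negative for edges/ends pointing to the left, positive for those pointing to the
right) equals `-k·sv V`. -/
def IsPreFloorDiagram (k : ℕ) {n1 n2 : ℕ} (φ : Fin n1 → ℤ) (μ : Fin n2 → ℤ)
    (D : FloorData n1 n2) : Prop :=
  (∀ j, fdMark φ μ j ≠ 0) ∧
  (∀ e, D.src e < D.tgt e) ∧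
  (∀ e, 0 < D.w e) ∧
  (∀ V : Fin D.n,
    ((Finset.univ.filter fun e : D.E =>
        (if D.thickAtSrc e then D.src e else D.tgt e) = V).card
      + (Finset.univ.filter fun j : Fin n2 => D.endv (Sum.inr j) = V).card)
      + 2 * D.sv V + D.gv V = D.kv V + 2) ∧
  (∀ V : Fin D.n,
    (∑ e ∈ Finset.univ.filter fun e : D.E => D.src e = V, D.w e)
      - (∑ e ∈ Finset.univ.filter fun e : D.E => D.tgt e = V, D.w e)
      + (∑ j ∈ Finset.univ.filter fun j : Fin n1 ⊕ Fin n2 => D.endv j = V, fdMark φ μ j)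
      = -(k : ℤ) * (D.sv V : ℤ))

/-- A floor diagram: the above, together with connectedness of the underlying graph. -/
def IsFloorDiagram (k : ℕ) {n1 n2 : ℕ} (φ : Fin n1 → ℤ) (μ : Fin n2 → ℤ)
    (D : FloorData n1 n2) : Prop :=
  IsPreFloorDiagram k φ μ D ∧
  (SimpleGraph.fromRel fun u v : Fin D.n => ∃ e, D.src e = u ∧ D.tgt e = v).Connected

/-- The genus of a (possibly disconnected) floor diagram:
`(#compact edges - #vertices + 1) + Σ_V gv V`; for a connected diagram the first summand
is the first Betti number of the underlying graph. -/
noncomputable def FloorData.genus {n1 n2 : ℕ} (D : FloorData n1 n2) : ℤ :=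
  (Fintype.card D.E : ℤ) - (D.n : ℤ) + 1 + ∑ V, (D.gv V : ℤ)

/-! Feynman graphs for products `P = m_+ ∘ m_1 ∘ ⋯ ∘ m_n ∘ m_-` of the specific shape of
Statement 8.  A monomial in the Heisenberg generators `a_s`, `b_s` is encoded by a list of
pairs `(t, s)`, where `t = true` stands for an `a`-type factor (non-thickened) and
`t = false` for a `b`-type factor (thickened), and `s` is the index.  The boundary monomials
are `m_+ = ∏_{μ i < 0} a_{|μ i|} ∘ ∏_{φ i < 0} b_{|φ i|}` and
`m_- = ∏_{μ i > 0} a_{-μ i} ∘ ∏_{φ i > 0} b_{-φ i}`, so their germs are indexed by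
`Fin n1 ⊕ Fin n2`: the germ indexed by `j` has index `-(mark j)`, lies in block `0` (i.e.
in `m_+`) if `mark j < 0` and in block `n+1` (i.e. in `m_-`) if `mark j > 0`, and is of
`b`-type for `φ`-germs and `a`-type for `μ`-germs.  The interior monomial `m_i` is given
by the list `l i`, its germs being attached to the vertex `v_i`, which forms block `i+1`. -/

/-- The germs of the product `P` determined by `(φ, μ)` and the interior monomials `l`. -/
abbrev PGerm (n1 n2 n : ℕ) (l : Fin n → List (Bool × ℤ)) : Type :=
  (Fin n1 ⊕ Fin n2) ⊕ (Σ i : Fin n, Fin ((l i).length))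

/-- The index of the factor corresponding to a germ (positive = right-directed,
negative = left-directed; the weight of the germ is the absolute value). -/
def pidx {n1 n2 n : ℕ} (φ : Fin n1 → ℤ) (μ : Fin n2 → ℤ)
    (l : Fin n → List (Bool × ℤ)) : PGerm n1 n2 n l → ℤ
  | .inl j => -(fdMark φ μ j)
  | .inr ip => ((l ip.1).get ip.2).2

/-- Whether a germ is of `a`-type (`true`, non-thickened) or `b`-type (`false`, thickened). -/
def ptypA {n1 n2 n : ℕ} (l : Fin n → List (Bool × ℤ)) : PGerm n1 n2 n l → Bool
  | .inl (.inl _) => false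
  | .inl (.inr _) => true
  | .inr ip => ((l ip.1).get ip.2).1

/-- The block of a germ: `0` for germs of `m_+`, `i+1` for germs of `m_i`,
`n+1` for germs of `m_-`. -/
def pblk {n1 n2 n : ℕ} (φ : Fin n1 → ℤ) (μ : Fin n2 → ℤ)
    (l : Fin n → List (Bool × ℤ)) : PGerm n1 n2 n l → ℕ
  | .inl j => if fdMark φ μ j < 0 then 0 else n + 1
  | .inr ip => (ip.1 : ℕ) + 1

/-- The vertex at which an interior germ is attached (junk value `0` for boundary germs). -/
def pvtx {n1 n2 n : ℕ} (l : Fin n → List (Bool × ℤ)) : PGerm n1 n2 n l → ℕ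
  | .inl _ => 0
  | .inr ip => (ip.1 : ℕ)

/-- A Feynman graph for `P`: a perfect matching (a fixed-point-free involution, encoded by a
function `f` pairing `g` with `f g`) of the germs such that each matched pair consists of a
right-directed germ in a strictly earlier block and a left-directed germ of the same weight
in a strictly later block, exactly one of the two being thickened. -/
def IsPFeynman {n1 n2 n : ℕ} (φ : Fin n1 → ℤ) (μ : Fin n2 → ℤ)
    (l : Fin n → List (Bool × ℤ)) (f : PGerm n1 n2 n l → PGerm n1 n2 n l) : Prop :=
  Function.Involutive f ∧
  ∀ g : PGerm n1 n2 n l,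
    pidx φ μ l (f g) = -(pidx φ μ l g) ∧
    (0 < pidx φ μ l g → pblk φ μ l g < pblk φ μ l (f g)) ∧
    ptypA l (f g) = ! ptypA l g

/-- The compact edges produced by a matching `f`: the matched pairs of two interior germs,
each such pair being recorded by its right-directed (positive-index) germ. -/
abbrev PCEdge {n1 n2 n : ℕ} (φ : Fin n1 → ℤ) (μ : Fin n2 → ℤ)
    (l : Fin n → List (Bool × ℤ)) (f : PGerm n1 n2 n l → PGerm n1 n2 n l) : Type :=
  {g : PGerm n1 n2 n l // g.isRight = true ∧ (f g).isRight = true ∧ 0 < pidx φ μ l g}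

/-- `PMatches φ μ gg ss kk l f D` says that the decorated graph `D` is (isomorphic to) the
decorated graph constructed from the Feynman graph `f`: it has vertex set `Fin n`, the
vertex `v_i` carrying the decorations `(gg i, ss i, kk i)`; its compact edges correspond to
the matched pairs of interior germs of `f`, with endpoints the vertices of the two germs
(left endpoint at the right-directed germ), weight the common weight of the pair, and
thickened flag on the side of the thickened (`b`-type) germ; and its end marked by the
entry `j` of `(φ, μ)` is attached at the vertex of the interior germ matched with the
boundary germ `j` (each flag inheriting the weight and thickening of its vertex germ). -/
def PMatches {n1 n2 n : ℕ} (φ : Fin n1 → ℤ) (μ : Fin n2 → ℤ)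
    (gg ss kk : Fin n → ℕ) (l : Fin n → List (Bool × ℤ))
    (f : PGerm n1 n2 n l → PGerm n1 n2 n l) (D : FloorData n1 n2) : Prop :=
  ∃ hn : D.n = n,
    (∀ i : Fin n, D.gv (Fin.cast hn.symm i) = gg i ∧
      D.sv (Fin.cast hn.symm i) = ss i ∧ D.kv (Fin.cast hn.symm i) = kk i) ∧
    (∀ j : Fin n1 ⊕ Fin n2, ((D.endv j : ℕ) = pvtx l (f (Sum.inl j)))) ∧
    ∃ eq : PCEdge φ μ l f ≃ D.E,
      ∀ e : PCEdge φ μ l f,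
        ((D.src (eq e) : ℕ) = pvtx l e.val) ∧
        ((D.tgt (eq e) : ℕ) = pvtx l (f e.val)) ∧
        (D.w (eq e) = pidx φ μ l e.val) ∧
        (D.thickAtSrc (eq e) = ! ptypA l e.val)

/-!
The interior germs of `P` are in bijection with the flags of the decorated graph: a compact
edge carries its two matched germs, an end the vertex germ matched with its boundary germ.
Under such a bijection (a `FloorData.Realization`) the sum of any function over the factors of
`m_V` equals its sum over the flags at `V`. This turns the index-sum and `b`-count conditions on
the monomials into the balancing and thickening conditions of the floor diagram, and back;
counting left-directed germs gives the genus, multiplying right-directed indices the weight.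
Conversely, listing the flags at each vertex, left-directed ones first, yields normally ordered
monomials together with a realization, and matching the two flags of every compact edge, and
every end with its boundary germ, is the required Feynman graph.
-/

open Finset

namespace FloorData

variable {n1 n2 : ℕ} (D : FloorData n1 n2) (φ : Fin n1 → ℤ) (μ : Fin n2 → ℤ)

/-- `(e, true)` and `(e, false)` are the flags of the compact edge `e` at `src e` and `tgt e`;
`j` is the flag of the end marked by `j`. -/
abbrev Flag : Type := (D.E × Bool) ⊕ (Fin n1 ⊕ Fin n2)

def flagVertex : D.Flag → Fin D.n
  | .inl (e, true) => D.src e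
  | .inl (e, false) => D.tgt e
  | .inr j => D.endv j

/-- The germ `(a-type?, index)` attached to a flag: right-directed iff the flag points right,
of `b`-type iff the flag is thickened. -/
def flagGerm : D.Flag → Bool × ℤ
  | .inl (e, true) => (!D.thickAtSrc e, D.w e)
  | .inl (e, false) => (D.thickAtSrc e, -D.w e)
  | .inr j => (j.isLeft, fdMark φ μ j)

theorem flagGerm_snd_ne_zero (hmark : ∀ j, fdMark φ μ j ≠ 0) (hw : ∀ e, 0 < D.w e)
    (d : D.Flag) : (D.flagGerm φ μ d).2 ≠ 0 := by
  rcases d with ⟨e, _ | _⟩ | j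
  · simpa [flagGerm] using (hw e).ne'
  · exact (hw e).ne'
  · exact hmark j

theorem card_thick_flags (V : Fin D.n) :
    #{d | D.flagVertex d = V ∧ !(D.flagGerm φ μ d).1} =
      #{e | (if D.thickAtSrc e then D.src e else D.tgt e) = V} +
        #{j : Fin n2 | D.endv (.inr j) = V} := by
  simp only [card_filter, Fintype.sum_sum_type, Fintype.sum_prod_type, Fintype.sum_bool]
  congr 1
  · refine sum_congr rfl fun e _ => ?_
    cases h : D.thickAtSrc e <;> simp [flagVertex, flagGerm, h]
  · simp [flagVertex, flagGerm]

theorem sum_flag_index (V : Fin D.n) :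
    ∑ d with D.flagVertex d = V, (D.flagGerm φ μ d).2 =
      ∑ e with D.src e = V, D.w e - ∑ e with D.tgt e = V, D.w e +
        ∑ j with D.endv j = V, fdMark φ μ j := by
  rw [sum_filter]
  simp only [sum_filter, Fintype.sum_sum_type, Fintype.sum_prod_type, Fintype.sum_bool,
    flagVertex, flagGerm, sum_add_distrib, sub_eq_add_neg, ← sum_neg_distrib, neg_ite, neg_zero]
  rfl

variable {D φ μ} in
theorem isPreFloorDiagram_iff {k : ℕ} :
    IsPreFloorDiagram k φ μ D ↔
      (∀ j, fdMark φ μ j ≠ 0) ∧ (∀ e, D.src e < D.tgt e) ∧ (∀ e, 0 < D.w e) ∧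
      (∀ V, #{d | D.flagVertex d = V ∧ !(D.flagGerm φ μ d).1} + 2 * D.sv V + D.gv V =
        D.kv V + 2) ∧
      (∀ V, ∑ d with D.flagVertex d = V, (D.flagGerm φ μ d).2 = -(k : ℤ) * D.sv V) := by
  simp only [card_thick_flags, sum_flag_index]
  rfl

end FloorData

/-- The germs of the interior monomials `m_1, …, m_n`: the `Sum.inr`-part of `PGerm`. -/
abbrev InteriorGerm {n : ℕ} (l : Fin n → List (Bool × ℤ)) : Type :=
  Σ i : Fin n, Fin (l i).length

def germData {n : ℕ} (l : Fin n → List (Bool × ℤ)) (ip : InteriorGerm l) : Bool × ℤ :=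
  (l ip.1).get ip.2

theorem sum_germData {n : ℕ} {M : Type*} [AddCommMonoid M] (l : Fin n → List (Bool × ℤ))
    (F : Fin n → Bool × ℤ → M) :
    ∑ ip : InteriorGerm l, F ip.1 (germData l ip) = ∑ i, ((l i).map (F i)).sum := by
  rw [Fintype.sum_sigma]
  refine sum_congr rfl fun i _ => ?_
  rw [← Fin.sum_univ_getElem]
  exact Fintype.sum_equiv (finCongr (List.length_map _).symm) _ _ fun m => by simp [germData]

/-- Identifies the factors of each monomial `l V` with the flags at `V`, so that sums over the
factors become sums over the flags. -/
structure FloorData.Realization {n1 n2 : ℕ} (φ : Fin n1 → ℤ) (μ : Fin n2 → ℤ)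
    (D : FloorData n1 n2) (l : Fin D.n → List (Bool × ℤ)) where
  germOf : D.Flag ≃ InteriorGerm l
  fst_germOf : ∀ d, (germOf d).1 = D.flagVertex d
  germData_germOf : ∀ d, germData l (germOf d) = D.flagGerm φ μ d

namespace FloorData.Realization

variable {n1 n2 : ℕ} {φ : Fin n1 → ℤ} {μ : Fin n2 → ℤ} {D : FloorData n1 n2}
  {l : Fin D.n → List (Bool × ℤ)}

theorem sum_map_sum_eq (R : D.Realization φ μ l) {M : Type*} [AddCommMonoid M]
    (F : Fin D.n → Bool × ℤ → M) :
    ∑ i, ((l i).map (F i)).sum = ∑ d, F (D.flagVertex d) (D.flagGerm φ μ d) :=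
  (sum_germData l F).symm.trans <| Fintype.sum_equiv R.germOf.symm _ _ fun ip => by
    rw [← R.fst_germOf, ← R.germData_germOf, Equiv.apply_symm_apply]

theorem sum_map_eq (R : D.Realization φ μ l) {M : Type*} [AddCommMonoid M] (G : Bool × ℤ → M)
    (V : Fin D.n) :
    ((l V).map G).sum = ∑ d with D.flagVertex d = V, G (D.flagGerm φ μ d) := by
  rw [sum_filter, ← R.sum_map_sum_eq fun i x => if i = V then G x else 0]
  have hV (i : Fin D.n) : ((l i).map fun x => if i = V then G x else 0).sum =
      if i = V then ((l V).map G).sum else 0 := by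
    split_ifs with h <;> simp [h]
  simp [hV]

theorem sum_flag_index (R : D.Realization φ μ l) (V : Fin D.n) :
    ∑ d with D.flagVertex d = V, (D.flagGerm φ μ d).2 = ((l V).map Prod.snd).sum :=
  (R.sum_map_eq Prod.snd V).symm

theorem card_thick_flags (R : D.Realization φ μ l) (V : Fin D.n) :
    #{d | D.flagVertex d = V ∧ !(D.flagGerm φ μ d).1} = ((l V).filter fun p => !p.1).length := by
  rw [← filter_filter, card_filter, ← R.sum_map_eq fun p => if !p.1 then 1 else 0]
  simp [List.sum_map_ite]

theorem sum_length_filter_neg (R : D.Realization φ μ l) (hw : ∀ e, 0 < D.w e) :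
    ∑ i, ((l i).filter fun p => decide (p.2 < 0)).length =
      Fintype.card D.E + #{j | fdMark φ μ j < 0} := by
  calc ∑ i, ((l i).filter fun p => decide (p.2 < 0)).length
      = ∑ i, ((l i).map fun x => if x.2 < 0 then 1 else 0).sum := by simp [List.sum_map_ite]
    _ = ∑ d, if (D.flagGerm φ μ d).2 < 0 then 1 else 0 :=
      R.sum_map_sum_eq fun _ x => if x.2 < 0 then 1 else 0
    _ = Fintype.card D.E + #{j | fdMark φ μ j < 0} := by
      rw [Fintype.sum_sum_type, Fintype.sum_prod_type, card_filter, Fintype.card_eq_sum_ones]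
      congr 1
      refine sum_congr rfl fun e _ => ?_
      simp [flagGerm, hw e, (hw e).not_gt]

theorem prod_pos_index (R : D.Realization φ μ l) (hw : ∀ e, 0 < D.w e) :
    ∏ ip : InteriorGerm l, (if 0 < (germData l ip).2 then (germData l ip).2 else 1) =
      (∏ e, D.w e) * ∏ j, if 0 < fdMark φ μ j then fdMark φ μ j else 1 := by
  rw [Fintype.prod_equiv R.germOf.symm _ (fun d => if 0 < (D.flagGerm φ μ d).2 then
    (D.flagGerm φ μ d).2 else 1) fun ip => by rw [← R.germData_germOf, Equiv.apply_symm_apply]]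
  rw [Fintype.prod_sum_type, Fintype.prod_prod_type]
  congr 1
  refine prod_congr rfl fun e _ => ?_
  simp [flagGerm, hw e, (hw e).not_gt]

end FloorData.Realization

theorem ite_pos_neg_mul_ite_pos {R : Type*} [Ring R] [LinearOrder R] [IsStrictOrderedRing R]
    {x : R} (hx : x ≠ 0) : (if 0 < -x then -x else 1) * (if 0 < x then x else 1) = |x| := by
  rcases hx.lt_or_gt with h | h
  · simp [h, h.not_gt, abs_of_neg h]
  · simp [h, h.not_gt, abs_of_pos h]

section FeynmanGraph

variable {n1 n2 n : ℕ} (φ : Fin n1 → ℤ) (μ : Fin n2 → ℤ) {l : Fin n → List (Bool × ℤ)}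
  (f : PGerm n1 n2 n l → PGerm n1 n2 n l)

def flagPGerm : (PCEdge φ μ l f × Bool) ⊕ (Fin n1 ⊕ Fin n2) → PGerm n1 n2 n l
  | .inl (e, true) => e.val
  | .inl (e, false) => f e.val
  | .inr j => f (.inl j)

variable {φ μ f}

theorem isRight_flagPGerm (hnomix : ∀ j, (f (.inl j)).isRight) :
    ∀ d, (flagPGerm φ μ f d).isRight
  | .inl (e, true) => e.prop.1
  | .inl (e, false) => e.prop.2.1
  | .inr j => hnomix j

theorem isRight_apply_flagPGerm (hf : IsPFeynman φ μ l f) :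
    ∀ d, (f (flagPGerm φ μ f d)).isRight = d.isLeft
  | .inl (e, true) => e.prop.2.1
  | .inl (e, false) => by simp [flagPGerm, hf.1 e.val, e.prop.1]
  | .inr j => by simp [flagPGerm, hf.1 _]

theorem pidx_flagPGerm_pos_iff (hf : IsPFeynman φ μ l f) (e : PCEdge φ μ l f) (b : Bool) :
    0 < pidx φ μ l (flagPGerm φ μ f (.inl (e, b))) ↔ b = true := by
  have := e.prop.2.2
  cases b
  · simp [flagPGerm, (hf.2 e.val).1, this.le]
  · simpa [flagPGerm] using this

theorem flagPGerm_injective (hf : IsPFeynman φ μ l f) : Function.Injective (flagPGerm φ μ f) := by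
  intro d d' h
  have hside := (isRight_apply_flagPGerm hf d).symm.trans (h ▸ isRight_apply_flagPGerm hf d')
  rcases d with ⟨e, b⟩ | j <;> rcases d' with ⟨e', b'⟩ | j' <;> simp only [Sum.isLeft_inl,
    Sum.isLeft_inr, Bool.true_eq_false, Bool.false_eq_true] at hside
  · obtain rfl : b = b' := by
      rw [Bool.eq_iff_iff, ← pidx_flagPGerm_pos_iff hf e, ← pidx_flagPGerm_pos_iff hf e', h]
    cases b
    · exact congrArg (fun x => Sum.inl (x, false)) (Subtype.ext (hf.1.injective h))
    · exact congrArg (fun x => Sum.inl (x, true)) (Subtype.ext h)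
  · exact congrArg Sum.inr (Sum.inl_injective (hf.1.injective h))

theorem exists_flagPGerm_eq_inr (hf : IsPFeynman φ μ l f) (hnz : ∀ i, ∀ p ∈ l i, p.2 ≠ 0)
    (ip : InteriorGerm l) : ∃ d, flagPGerm φ μ f d = .inr ip := by
  have hpidx : pidx φ μ l (.inr ip) ≠ 0 := hnz ip.1 _ (List.get_mem _ _)
  rcases hfg : f (.inr ip) with j | ip'
  · exact ⟨.inr j, by rw [flagPGerm, ← hfg, hf.1]⟩
  · rcases hpidx.lt_or_gt with hneg | hpos
    · refine ⟨.inl (⟨f (.inr ip), by rw [hfg]; rfl, by rw [hf.1]; rfl, ?_⟩, false), hf.1 _⟩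
      rw [(hf.2 _).1]
      omega
    · exact ⟨.inl (⟨.inr ip, rfl, by rw [hfg]; rfl, hpos⟩, true), rfl⟩

variable (φ μ f) in
def flagInteriorGerm (hnomix : ∀ j, (f (.inl j)).isRight)
    (d : (PCEdge φ μ l f × Bool) ⊕ (Fin n1 ⊕ Fin n2)) : InteriorGerm l :=
  (flagPGerm φ μ f d).getRight (isRight_flagPGerm hnomix d)

theorem inr_flagInteriorGerm (hnomix : ∀ j, (f (.inl j)).isRight)
    (d : (PCEdge φ μ l f × Bool) ⊕ (Fin n1 ⊕ Fin n2)) :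
    Sum.inr (flagInteriorGerm φ μ f hnomix d) = flagPGerm φ μ f d :=
  Sum.inr_getRight _ _

theorem flagInteriorGerm_bijective (hf : IsPFeynman φ μ l f) (hnz : ∀ i, ∀ p ∈ l i, p.2 ≠ 0)
    (hnomix : ∀ j, (f (.inl j)).isRight) : Function.Bijective (flagInteriorGerm φ μ f hnomix) :=
  ⟨fun d d' h => flagPGerm_injective hf <| by
      rw [← inr_flagInteriorGerm hnomix, h, inr_flagInteriorGerm],
    fun ip => (exists_flagPGerm_eq_inr hf hnz ip).imp fun d hd =>
      Sum.inr_injective <| (inr_flagInteriorGerm hnomix d).trans hd⟩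

variable (φ μ f) in
def feynmanFloorData (hnomix : ∀ j, (f (.inl j)).isRight) (gg ss kk : Fin n → ℕ) :
    FloorData n1 n2 where
  n := n
  E := PCEdge φ μ l f
  src e := (flagInteriorGerm φ μ f hnomix (.inl (e, true))).1
  tgt e := (flagInteriorGerm φ μ f hnomix (.inl (e, false))).1
  w e := pidx φ μ l e.val
  thickAtSrc e := !ptypA l e.val
  endv j := (flagInteriorGerm φ μ f hnomix (.inr j)).1
  gv := gg
  sv := ss
  kv := kk

variable (hnomix : ∀ j, (f (.inl j)).isRight) (gg ss kk : Fin n → ℕ)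

theorem flagVertex_feynmanFloorData (d : (PCEdge φ μ l f × Bool) ⊕ (Fin n1 ⊕ Fin n2)) :
    (feynmanFloorData φ μ f hnomix gg ss kk).flagVertex d =
      (flagInteriorGerm φ μ f hnomix d).1 := by
  rcases d with ⟨e, _ | _⟩ | j <;> rfl

theorem flagGerm_feynmanFloorData (hf : IsPFeynman φ μ l f)
    (d : (PCEdge φ μ l f × Bool) ⊕ (Fin n1 ⊕ Fin n2)) :
    (feynmanFloorData φ μ f hnomix gg ss kk).flagGerm φ μ d =
      germData l (flagInteriorGerm φ μ f hnomix d) := by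
  change _ = (ptypA l (.inr _ : PGerm n1 n2 n l), pidx φ μ l (.inr _))
  rw [inr_flagInteriorGerm]
  rcases d with ⟨e, _ | _⟩ | (j | j) <;>
    simp only [FloorData.flagGerm, feynmanFloorData, flagPGerm, hf.2] <;> simp [ptypA, pidx, fdMark]

noncomputable def feynmanRealization (hf : IsPFeynman φ μ l f) (hnz : ∀ i, ∀ p ∈ l i, p.2 ≠ 0) :
    (feynmanFloorData φ μ f hnomix gg ss kk).Realization φ μ l where
  germOf := Equiv.ofBijective _ (flagInteriorGerm_bijective hf hnz hnomix)
  fst_germOf d := (flagVertex_feynmanFloorData hnomix gg ss kk d).symm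
  germData_germOf d := (flagGerm_feynmanFloorData hnomix gg ss kk hf d).symm

theorem isPreFloorDiagram_feynmanFloorData (k : ℕ) (hφ : ∀ i, φ i ≠ 0) (hμ : ∀ i, μ i ≠ 0)
    (hf : IsPFeynman φ μ l f) (hnz : ∀ i, ∀ p ∈ l i, p.2 ≠ 0)
    (hsum : ∀ i, ((l i).map Prod.snd).sum = -(k : ℤ) * (ss i : ℤ))
    (hb : ∀ i, ((l i).filter fun p => !p.1).length + 2 * ss i + gg i = kk i + 2) :
    IsPreFloorDiagram k φ μ (feynmanFloorData φ μ f hnomix gg ss kk) := by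
  let R := feynmanRealization hnomix gg ss kk hf hnz
  refine FloorData.isPreFloorDiagram_iff.mpr ⟨?_, fun e => ?_, fun e => e.prop.2.2,
    fun V => (R.card_thick_flags V).symm ▸ hb V, fun V => (R.sum_flag_index V).symm ▸ hsum V⟩
  · rintro (i | i)
    exacts [hφ i, hμ i]
  · have hblk : pblk φ μ l (flagPGerm φ μ f (.inl (e, true))) <
        pblk φ μ l (flagPGerm φ μ f (.inl (e, false))) := (hf.2 e.val).2.1 e.prop.2.2
    rw [← inr_flagInteriorGerm hnomix (.inl (e, true)),
      ← inr_flagInteriorGerm hnomix (.inl (e, false))] at hblk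
    exact Nat.succ_lt_succ_iff.mp hblk

theorem pMatches_feynmanFloorData :
    PMatches φ μ gg ss kk l f (feynmanFloorData φ μ f hnomix gg ss kk) := by
  have hvtx d : pvtx l (flagPGerm φ μ f d) = (flagInteriorGerm φ μ f hnomix d).1 := by
    rw [← inr_flagInteriorGerm hnomix]; rfl
  exact ⟨rfl, fun i => ⟨rfl, rfl, rfl⟩, fun j => (hvtx (.inr j)).symm, Equiv.refl _,
    fun e => ⟨(hvtx (.inl (e, true))).symm, (hvtx (.inl (e, false))).symm, rfl, rfl⟩⟩

theorem sum_length_filter_neg_eq (hf : IsPFeynman φ μ l f) (hnz : ∀ i, ∀ p ∈ l i, p.2 ≠ 0)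
    (hnomix : ∀ j, (f (.inl j)).isRight) :
    ∑ i, (((l i).filter fun p => decide (p.2 < 0)).length : ℤ) =
      Fintype.card (PCEdge φ μ l f) + #{j | fdMark φ μ j < 0} := by
  exact_mod_cast (feynmanRealization hnomix 0 0 0 hf hnz).sum_length_filter_neg
    fun e => e.prop.2.2

theorem prod_pos_pidx_eq (hφ : ∀ i, φ i ≠ 0) (hμ : ∀ i, μ i ≠ 0) (hf : IsPFeynman φ μ l f)
    (hnz : ∀ i, ∀ p ∈ l i, p.2 ≠ 0) (hnomix : ∀ j, (f (.inl j)).isRight) :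
    ∏ g : PGerm n1 n2 n l with 0 < pidx φ μ l g, pidx φ μ l g =
      (∏ i, |φ i|) * (∏ i, |μ i|) * ∏ e : PCEdge φ μ l f, pidx φ μ l e.val := by
  rw [prod_filter, Fintype.prod_sum_type]
  change (∏ j, if 0 < -fdMark φ μ j then -fdMark φ μ j else 1) *
    (∏ ip : InteriorGerm l, if 0 < (germData l ip).2 then (germData l ip).2 else 1) = _
  have hinterior : (∏ ip : InteriorGerm l,
      if 0 < (germData l ip).2 then (germData l ip).2 else 1) =
      (∏ e : PCEdge φ μ l f, pidx φ μ l e.val) *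
        ∏ j, if 0 < fdMark φ μ j then fdMark φ μ j else 1 :=
    (feynmanRealization hnomix 0 0 0 hf hnz).prod_pos_index fun e => e.prop.2.2
  rw [hinterior, mul_left_comm, mul_comm]
  congr 1
  rw [← prod_mul_distrib, Fintype.prod_sum_type]
  congr 1 <;> refine prod_congr rfl fun i _ => ite_pos_neg_mul_ite_pos ?_
  exacts [hφ i, hμ i]

end FeynmanGraph

namespace FloorData

variable {n1 n2 : ℕ} (D : FloorData n1 n2) (φ : Fin n1 → ℤ) (μ : Fin n2 → ℤ)

/-- Left-directed flags first, so that the monomial read off them is normally ordered. -/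
noncomputable def flagsAt (V : Fin D.n) : List D.Flag :=
  (univ.filter fun d => D.flagVertex d = V ∧ (D.flagGerm φ μ d).2 < 0).toList ++
    (univ.filter fun d => D.flagVertex d = V ∧ 0 < (D.flagGerm φ μ d).2).toList

noncomputable def monomialAt (V : Fin D.n) : List (Bool × ℤ) :=
  (D.flagsAt φ μ V).map (D.flagGerm φ μ)

variable {D φ μ}

theorem mem_flagsAt (hne : ∀ d, (D.flagGerm φ μ d).2 ≠ 0) {d : D.Flag} {V : Fin D.n} :
    d ∈ D.flagsAt φ μ V ↔ D.flagVertex d = V := by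
  simp only [flagsAt, List.mem_append, mem_toList, mem_filter, mem_univ, true_and, ← and_or_left,
    and_iff_left_iff_imp]
  exact fun _ => (hne d).lt_or_gt

theorem nodup_flagsAt (V : Fin D.n) : (D.flagsAt φ μ V).Nodup := by
  refine (nodup_toList _).append (nodup_toList _) fun d h₁ h₂ => ?_
  simp only [mem_toList, mem_filter] at h₁ h₂
  exact h₁.2.2.not_gt h₂.2.2

theorem pairwise_monomialAt (V : Fin D.n) :
    (D.monomialAt φ μ V).Pairwise fun x y => ¬(0 < x.2 ∧ y.2 < 0) := by
  simp only [monomialAt, flagsAt, List.map_append, List.pairwise_append, List.pairwise_map,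
    List.mem_map, mem_toList, mem_filter]
  refine ⟨List.pairwise_of_forall_mem_list fun a ha _ _ h => ?_,
    List.pairwise_of_forall_mem_list fun _ _ b hb h => ?_, ?_⟩
  · exact ((mem_filter.mp (mem_toList.mp ha)).2.2).not_gt h.1
  · exact ((mem_filter.mp (mem_toList.mp hb)).2.2).not_gt h.2
  · rintro _ ⟨a, ⟨-, -, ha⟩, rfl⟩ _ - h
    exact ha.not_gt h.1

theorem snd_ne_zero_of_mem_monomialAt (hne : ∀ d, (D.flagGerm φ μ d).2 ≠ 0) (V : Fin D.n) :
    ∀ p ∈ D.monomialAt φ μ V, p.2 ≠ 0 := by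
  simp only [monomialAt, List.mem_map]
  rintro _ ⟨d, -, rfl⟩
  exact hne d

noncomputable def flagsAtEquiv (hne : ∀ d, (D.flagGerm φ μ d).2 ≠ 0) :
    D.Flag ≃ InteriorGerm (D.monomialAt φ μ) :=
  (Equiv.sigmaFiberEquiv D.flagVertex).symm.trans <| Equiv.sigmaCongrRight fun V =>
    ((Equiv.subtypeEquivRight fun _ => (mem_flagsAt hne).symm).trans
      ((nodup_flagsAt V).getEquiv _).symm).trans (finCongr (List.length_map _).symm)

theorem germData_eq_flagGerm_flagsAtEquiv_symm (hne : ∀ d, (D.flagGerm φ μ d).2 ≠ 0)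
    (ip : InteriorGerm (D.monomialAt φ μ)) :
    germData (D.monomialAt φ μ) ip = D.flagGerm φ μ ((flagsAtEquiv hne).symm ip) := by
  simp only [germData, monomialAt, List.get_eq_getElem, List.getElem_map]
  rfl

noncomputable def monomialRealization (hne : ∀ d, (D.flagGerm φ μ d).2 ≠ 0) :
    D.Realization φ μ (D.monomialAt φ μ) where
  germOf := flagsAtEquiv hne
  fst_germOf _ := rfl
  germData_germOf d := by
    rw [germData_eq_flagGerm_flagsAtEquiv_symm hne, Equiv.symm_apply_apply]

variable {l : Fin D.n → List (Bool × ℤ)}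

variable (D) in
def flagMatching : (Fin n1 ⊕ Fin n2) ⊕ D.Flag → (Fin n1 ⊕ Fin n2) ⊕ D.Flag
  | .inl j => .inr (.inr j)
  | .inr (.inl (e, b)) => .inr (.inl (e, !b))
  | .inr (.inr j) => .inl j

theorem flagMatching_involutive : Function.Involutive D.flagMatching := by
  rintro (j | ⟨e, b⟩ | j) <;> simp [flagMatching]

namespace Realization

def pgermEquiv (R : D.Realization φ μ l) : PGerm n1 n2 D.n l ≃ (Fin n1 ⊕ Fin n2) ⊕ D.Flag :=
  Equiv.sumCongr (Equiv.refl _) R.germOf.symm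

def feynman (R : D.Realization φ μ l) (g : PGerm n1 n2 D.n l) : PGerm n1 n2 D.n l :=
  R.pgermEquiv.symm (D.flagMatching (R.pgermEquiv g))

variable (R : D.Realization φ μ l)

@[simp]
theorem pgermEquiv_symm_inl (j : Fin n1 ⊕ Fin n2) : R.pgermEquiv.symm (.inl j) = .inl j := rfl

@[simp]
theorem pgermEquiv_symm_inr (d : D.Flag) : R.pgermEquiv.symm (.inr d) = .inr (R.germOf d) := rfl

@[simp]
theorem feynman_pgermEquiv_symm (x) :
    R.feynman (R.pgermEquiv.symm x) = R.pgermEquiv.symm (D.flagMatching x) := by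
  simp [feynman]

@[simp]
theorem pidx_inr_germOf (d : D.Flag) :
    pidx φ μ l (.inr (R.germOf d)) = (D.flagGerm φ μ d).2 :=
  congrArg Prod.snd (R.germData_germOf d)

@[simp]
theorem ptypA_inr_germOf (d : D.Flag) :
    ptypA l (.inr (R.germOf d) : PGerm n1 n2 D.n l) = (D.flagGerm φ μ d).1 :=
  congrArg Prod.fst (R.germData_germOf d)

@[simp]
theorem pblk_inr_germOf (d : D.Flag) :
    pblk φ μ l (.inr (R.germOf d)) = D.flagVertex d + 1 := by
  simp [pblk, R.fst_germOf]

@[simp]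
theorem pvtx_inr_germOf (d : D.Flag) :
    pvtx l (.inr (R.germOf d) : PGerm n1 n2 D.n l) = D.flagVertex d := by
  simp [pvtx, R.fst_germOf]

theorem isPFeynman_feynman (hlt : ∀ e, D.src e < D.tgt e) (hw : ∀ e, 0 < D.w e) :
    IsPFeynman φ μ l R.feynman := by
  refine ⟨fun g => by simp [feynman, flagMatching_involutive _], fun g => ?_⟩
  obtain ⟨x, rfl⟩ := R.pgermEquiv.symm.surjective g
  rw [feynman_pgermEquiv_symm]
  rcases x with (j | j) | ⟨e, _ | _⟩ | (j | j) <;>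
    simp [flagMatching, flagGerm, flagVertex, pidx.eq_1, pblk.eq_1, ptypA.eq_1, ptypA.eq_2,
      fdMark, hlt, hw, (hw _).not_gt]
  all_goals intro h; simp [h, h.not_gt]

theorem feynman_inl (j : Fin n1 ⊕ Fin n2) : R.feynman (.inl j) = .inr (R.germOf (.inr j)) :=
  R.feynman_pgermEquiv_symm (.inl j)

theorem feynman_inr_germOf (d : D.Flag) :
    R.feynman (.inr (R.germOf d)) = R.pgermEquiv.symm (D.flagMatching (.inr d)) :=
  R.feynman_pgermEquiv_symm (.inr d)

def toPCEdge (hw : ∀ e, 0 < D.w e) (e : D.E) : PCEdge φ μ l R.feynman :=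
  ⟨.inr (R.germOf (.inl (e, true))), rfl, by simp [feynman_inr_germOf, flagMatching],
    by simpa [flagGerm] using hw e⟩

theorem toPCEdge_bijective (hw : ∀ e, 0 < D.w e) : Function.Bijective (R.toPCEdge hw) := by
  refine ⟨fun e e' h => ?_, fun c => ?_⟩
  · simpa [toPCEdge] using h
  · obtain ⟨hright, hright', hpos⟩ := c.prop
    obtain ⟨x, hx⟩ := R.pgermEquiv.symm.surjective c.val
    rw [← hx] at hright hright' hpos
    rcases x with j | ⟨e, _ | _⟩ | j
    · simp at hright
    · simp [flagGerm, (hw e).not_gt] at hpos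
    · exact ⟨e, Subtype.ext hx⟩
    · simp [feynman_inr_germOf, flagMatching] at hright'

theorem pMatches_feynman (hw : ∀ e, 0 < D.w e) :
    PMatches φ μ D.gv D.sv D.kv l R.feynman D := by
  refine ⟨rfl, fun _ => ⟨rfl, rfl, rfl⟩, fun j => ?_,
    (Equiv.ofBijective _ (R.toPCEdge_bijective hw)).symm, fun c => ?_⟩
  · simp [feynman_inl, flagVertex]
  · obtain ⟨e, rfl⟩ := (R.toPCEdge_bijective hw).2 c
    rw [Equiv.ofBijective_symm_apply_apply]
    simp [toPCEdge, feynman_inr_germOf, flagMatching, flagVertex, flagGerm]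

end Realization

variable {k : ℕ}

theorem exists_feynman_of_isPreFloorDiagram (hD : IsPreFloorDiagram k φ μ D) :
    ∃ (l : Fin D.n → List (Bool × ℤ)) (f : PGerm n1 n2 D.n l → PGerm n1 n2 D.n l),
      (∀ i, ∀ p ∈ l i, p.2 ≠ 0) ∧
      (∀ i, (l i).Pairwise fun x y => ¬(0 < x.2 ∧ y.2 < 0)) ∧
      (∀ i, ((l i).map Prod.snd).sum = -(k : ℤ) * (D.sv i : ℤ)) ∧
      (∀ i, ((l i).filter fun p => !p.1).length + 2 * D.sv i + D.gv i = D.kv i + 2) ∧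
      IsPFeynman φ μ l f ∧
      (∀ j : Fin n1 ⊕ Fin n2, (f (Sum.inl j)).isRight = true) ∧
      PMatches φ μ D.gv D.sv D.kv l f D := by
  obtain ⟨hmark, hlt, hw, hthick, hindex⟩ := isPreFloorDiagram_iff.mp hD
  have hne := D.flagGerm_snd_ne_zero φ μ hmark hw
  let R := monomialRealization hne
  exact ⟨D.monomialAt φ μ, R.feynman, snd_ne_zero_of_mem_monomialAt hne, pairwise_monomialAt,
    fun V => R.sum_flag_index V ▸ hindex V, fun V => R.card_thick_flags V ▸ hthick V,
    R.isPFeynman_feynman hlt hw, fun _ => rfl, R.pMatches_feynman hw⟩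

end FloorData

theorem feynman_graphs_are_floor_diagrams_general (k : ℕ) {n1 n2 n : ℕ}
    (φ : Fin n1 → ℤ) (μ : Fin n2 → ℤ) (hφ : ∀ i, φ i ≠ 0) (hμ : ∀ i, μ i ≠ 0)
    (kk ss gg : Fin n → ℕ) (l : Fin n → List (Bool × ℤ))
    (hnz : ∀ i, ∀ p ∈ l i, p.2 ≠ 0)
    (hsum : ∀ i, ((l i).map Prod.snd).sum = -(k : ℤ) * (ss i : ℤ))
    (hb : ∀ i, ((l i).filter fun p => !p.1).length + 2 * ss i + gg i = kk i + 2)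
    (f : PGerm n1 n2 n l → PGerm n1 n2 n l) (hf : IsPFeynman φ μ l f)
    (hnomix : ∀ j : Fin n1 ⊕ Fin n2, (f (Sum.inl j)).isRight = true) :
    -- (1)
    (∃ D : FloorData n1 n2, PMatches φ μ gg ss kk l f D ∧ IsPreFloorDiagram k φ μ D) ∧
    -- (2)
    ((Fintype.card (PCEdge φ μ l f) : ℤ) - (n : ℤ) + 1 + ∑ i, (gg i : ℤ)
      = (∑ i, ((gg i : ℤ) + (((l i).filter fun p => decide (p.2 < 0)).length : ℤ) - 1))
        + 1
        - ((Finset.univ.filter fun j : Fin n1 ⊕ Fin n2 => fdMark φ μ j < 0).card : ℤ)) ∧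
    -- (3)
    ((∏ g ∈ Finset.univ.filter fun g : PGerm n1 n2 n l => 0 < pidx φ μ l g, pidx φ μ l g)
      = (∏ i, |φ i|) * (∏ i, |μ i|) * ∏ e : PCEdge φ μ l f, pidx φ μ l e.val) ∧
    -- (4)
    (∀ D : FloorData n1 n2, IsPreFloorDiagram k φ μ D →
      (∃ hn : D.n = n, ∀ i : Fin n, D.gv (Fin.cast hn.symm i) = gg i ∧
        D.sv (Fin.cast hn.symm i) = ss i ∧ D.kv (Fin.cast hn.symm i) = kk i) →
      ∃ (l' : Fin n → List (Bool × ℤ))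
        (f' : PGerm n1 n2 n l' → PGerm n1 n2 n l'),
        (∀ i, ∀ p ∈ l' i, p.2 ≠ 0) ∧
        (∀ i, (l' i).Pairwise fun x y => ¬(0 < x.2 ∧ y.2 < 0)) ∧
        (∀ i, ((l' i).map Prod.snd).sum = -(k : ℤ) * (ss i : ℤ)) ∧
        (∀ i, ((l' i).filter fun p => !p.1).length + 2 * ss i + gg i = kk i + 2) ∧
        IsPFeynman φ μ l' f' ∧
        (∀ j : Fin n1 ⊕ Fin n2, (f' (Sum.inl j)).isRight = true) ∧
        PMatches φ μ gg ss kk l' f' D) := by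
  refine ⟨⟨feynmanFloorData φ μ f hnomix gg ss kk, pMatches_feynmanFloorData hnomix gg ss kk,
      isPreFloorDiagram_feynmanFloorData hnomix gg ss kk k hφ hμ hf hnz hsum hb⟩, ?_,
    prod_pos_pidx_eq hφ hμ hf hnz hnomix, ?_⟩
  · have hneg := sum_length_filter_neg_eq hf hnz hnomix
    simp only [sum_sub_distrib, sum_add_distrib, sum_const, card_univ, Fintype.card_fin,
      nsmul_eq_mul, mul_one]
    linarith
  · rintro D hD ⟨rfl, hdec⟩
    obtain rfl : gg = D.gv := funext fun i => (hdec i).1.symm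
    obtain rfl : ss = D.sv := funext fun i => (hdec i).2.1.symm
    obtain rfl : kk = D.kv := funext fun i => (hdec i).2.2.symm
    exact FloorData.exists_feynman_of_isPreFloorDiagram hD

/-- Fix `k`, sequences `φ`, `μ` of nonzero integers, decorations
`(kk i, ss i, gg i)`, and interior normally ordered monomials `l i` with nonzero indices
summing to `-k·ss i` and with exactly `kk i + 2 - 2·ss i - gg i` factors of `b`-type.
Let `f` be a Feynman graph for the product `P` so determined, in which no germ of `m_+` is
matched with a germ of `m_-`.  Then:
(1) the decorated graph constructed from `f` is a possibly disconnected floor diagram for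
`𝔽_k` of degree `(φ,μ)`;
(2) its genus `#CE - n + 1 + Σ gg i` equals `Σ_i (gg i + h i - 1) + 1 - ℓ`, where `h i` is
the number of factors of `m_i` with negative index and `ℓ` is the number of factors of `m_+`;
(3) the weight of `f` (the product of the indices of all right-directed germs) equals
`∏|φ i| · ∏|μ i| · ∏_e w(e)`, the last product being over the compact edges;
(4) conversely, every possibly disconnected floor diagram for `𝔽_k` of degree `(φ,μ)` whose
`i`-th vertex carries the decorations `(gg i, ss i, kk i)` arises by this construction from
such interior monomials `l'` and such a Feynman graph `f'`. -/
theorem feynman_graphs_are_floor_diagrams (k : ℕ) {n1 n2 n : ℕ}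
    (φ : Fin n1 → ℤ) (μ : Fin n2 → ℤ) (hφ : ∀ i, φ i ≠ 0) (hμ : ∀ i, μ i ≠ 0)
    (kk ss gg : Fin n → ℕ) (l : Fin n → List (Bool × ℤ))
    (hnz : ∀ i, ∀ p ∈ l i, p.2 ≠ 0)
    (hnormal : ∀ i, (l i).Pairwise fun x y => ¬(0 < x.2 ∧ y.2 < 0))
    (hsum : ∀ i, ((l i).map Prod.snd).sum = -(k : ℤ) * (ss i : ℤ))
    (hb : ∀ i, ((l i).filter fun p => !p.1).length + 2 * ss i + gg i = kk i + 2)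
    (f : PGerm n1 n2 n l → PGerm n1 n2 n l) (hf : IsPFeynman φ μ l f)
    (hnomix : ∀ j : Fin n1 ⊕ Fin n2, (f (Sum.inl j)).isRight = true) :
    -- (1)
    (∃ D : FloorData n1 n2, PMatches φ μ gg ss kk l f D ∧ IsPreFloorDiagram k φ μ D) ∧
    -- (2)
    ((Fintype.card (PCEdge φ μ l f) : ℤ) - (n : ℤ) + 1 + ∑ i, (gg i : ℤ)
      = (∑ i, ((gg i : ℤ) + (((l i).filter fun p => decide (p.2 < 0)).length : ℤ) - 1))
        + 1
        - ((Finset.univ.filter fun j : Fin n1 ⊕ Fin n2 => fdMark φ μ j < 0).card : ℤ)) ∧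
    -- (3)
    ((∏ g ∈ Finset.univ.filter fun g : PGerm n1 n2 n l => 0 < pidx φ μ l g, pidx φ μ l g)
      = (∏ i, |φ i|) * (∏ i, |μ i|) * ∏ e : PCEdge φ μ l f, pidx φ μ l e.val) ∧
    -- (4)
    (∀ D : FloorData n1 n2, IsPreFloorDiagram k φ μ D →
      (∃ hn : D.n = n, ∀ i : Fin n, D.gv (Fin.cast hn.symm i) = gg i ∧
        D.sv (Fin.cast hn.symm i) = ss i ∧ D.kv (Fin.cast hn.symm i) = kk i) →
      ∃ (l' : Fin n → List (Bool × ℤ))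
        (f' : PGerm n1 n2 n l' → PGerm n1 n2 n l'),
        (∀ i, ∀ p ∈ l' i, p.2 ≠ 0) ∧
        (∀ i, (l' i).Pairwise fun x y => ¬(0 < x.2 ∧ y.2 < 0)) ∧
        (∀ i, ((l' i).map Prod.snd).sum = -(k : ℤ) * (ss i : ℤ)) ∧
        (∀ i, ((l' i).filter fun p => !p.1).length + 2 * ss i + gg i = kk i + 2) ∧
        IsPFeynman φ μ l' f' ∧
        (∀ j : Fin n1 ⊕ Fin n2, (f' (Sum.inl j)).isRight = true) ∧
        PMatches φ μ gg ss kk l' f' D) :=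
  feynman_graphs_are_floor_diagrams_general k φ μ hφ hμ kk ss gg l hnz hsum hb f hf hnomix
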